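/- arXiv:2207.03969 — 2 statements merged into one kernel-verified Lean document; each statement's English description precedes it below -/
import Mathlib

section
/- Let B ⊆ κ and define the operator Φ^B on subsets x of κ by: Φ^B(x) = cl(x ∩ B) if sup(x ∩ B) = sup(x), and Φ^B(x) = x \ sup(x ∩ B) otherwise, where cl(A) = A ∪ acc⁺(A) and acc⁺(A) = {α < ssup(A) : sup(A ∩ α) = α > 0}. Then: (1) sup(Φ^B(x)) = sup(x); (2) if sup(x ∩ B) = sup(x), then the set of non-accumulation points of Φ^B(x) is a cofinal subset of x ∩ B; (3) if x is a closed subset of sup(x), then Φ^B(x) ⊆ x and otp(Φ^B(x)) ≤ otp(x). -/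
open Set Ordinal

noncomputable section

abbrev O : Type 1 := Ordinal.{0}

/-- `ssup A` is the strict supremum of a set of ordinals. -/
def ssup (A : Set O) : O := sSup ((· + 1) '' A)

/-- `acc⁺(A)`: accumulation points below the strict sup. -/
def accP (A : Set O) : Set O := {α | α < ssup A ∧ 0 < α ∧ sSup (A ∩ Iio α) = α}

def accOf (A : Set O) : Set O := A ∩ accP A

def nacc (A : Set O) : Set O := A \ accOf A

def clOf (A : Set O) : Set O := A ∪ accP A

/-- order type of a set of ordinals -/
def otp (A : Set O) : Ordinal.{1} := Ordinal.type (Subrel ((· < ·) : O → O → Prop) (· ∈ A))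

/-- lift a small ordinal one universe up -/
def olift (a : O) : Ordinal.{1} := Ordinal.lift.{1} a

/-- `suc_σ(A)`: elements of `A` whose index in `A` is `j+1` for some `j < σ`. -/
def sucSet (σ : Ordinal.{1}) (A : Set O) : Set O := {β | β ∈ A ∧ ∃ j < σ, otp (A ∩ Iio β) = j + 1}

def UnbIn (A : Set O) (δ : O) : Prop := ∀ α < δ, ∃ β ∈ A, α < β ∧ β < δ

def IsClubIn (C : Set O) (δ : O) : Prop :=
  C ⊆ Iio δ ∧ UnbIn C δ ∧ ∀ α < δ, 0 < α → sSup (C ∩ Iio α) = α → α ∈ C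

def IsStatIn (S : Set O) (δ : O) : Prop :=
  S ⊆ Iio δ ∧ ∀ D, IsClubIn D δ → (S ∩ D).Nonempty

def Ecof (κ : O) (lam : Cardinal.{0}) : Set O := {δ | δ < κ ∧ δ.cof = lam}

def PhiSup (B x : Set O) : Set O :=
  if sSup (x ∩ B) = sSup x then clOf (x ∩ B) else x \ Iio (sSup (x ∩ B))

def PhiD (D x : Set O) : Set O :=
  if sSup (D ∩ Iio (sSup x)) = sSup x then
    {γ | ∃ η ∈ x, sInf D < η ∧ γ = sSup (D ∩ Iio η)}
  else x \ Iio (sSup (D ∩ Iio (sSup x)))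

/-- `cf(δ)`-additive proper ideal on `δ` extending the bounded ideal. -/
def GoodIdeal (δ : O) (J : Set (Set O)) : Prop :=
  (∀ A B : Set O, A ⊆ B → B ∈ J → A ∈ J) ∧
  (Iio δ ∉ J) ∧
  (∀ B : Set O, B ⊆ Iio δ → sSup B < δ → B ∈ J) ∧
  (∀ ξ < (Ordinal.cof δ).ord, ∀ f : O → Set O, (∀ i < ξ, f i ∈ J) → (⋃ i ∈ Iio ξ, f i) ∈ J)

/-!
Accumulation points of a bounded set lie below its supremum, so closure keeps the supremum.
Above any `b < sup C` the least element of `C` exceeding `b` is a non-accumulation point, so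
`nacc C` is cofinal in `C`; and a non-accumulation point of `cl(A)` already lies in `A`. Since
`acc⁺` is monotone, `cl(x ∩ B) ⊆ x` when `x` is closed. In the other case of `Φ^B`, cutting off
an initial segment below `sup(x ∩ B) < sup x` keeps the supremum.
-/

lemma sSup_inter_Iio_le (A : Set O) (α : O) : sSup (A ∩ Iio α) ≤ α :=
  csSup_le' fun _ hc => hc.2.le

lemma le_sSup_of_mem_accP {A : Set O} (hA : BddAbove A) {α : O} (h : α ∈ accP A) :
    α ≤ sSup A :=
  h.2.2 ▸ csSup_le_csSup' hA inter_subset_left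

lemma le_sSup_of_mem_clOf {A : Set O} (hA : BddAbove A) {c : O} (hc : c ∈ clOf A) :
    c ≤ sSup A :=
  hc.elim (le_csSup hA) (le_sSup_of_mem_accP hA)

lemma bddAbove_clOf {A : Set O} (hA : BddAbove A) : BddAbove (clOf A) :=
  ⟨sSup A, fun _ hc => le_sSup_of_mem_clOf hA hc⟩

lemma sSup_clOf {A : Set O} (hA : BddAbove A) : sSup (clOf A) = sSup A :=
  le_antisymm (csSup_le' fun _ hc => le_sSup_of_mem_clOf hA hc)
    (csSup_le_csSup' (bddAbove_clOf hA) subset_union_left)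

lemma ssup_mono {A C : Set O} (hC : BddAbove C) (h : A ⊆ C) : ssup A ≤ ssup C := by
  obtain ⟨b, hb⟩ := hC
  have hbd : BddAbove ((· + 1) '' C) := ⟨b + 1, by
    rintro _ ⟨a, ha, rfl⟩
    exact add_le_add_left (hb ha) 1⟩
  exact csSup_le_csSup' hbd (image_mono h)

lemma accP_mono {A C : Set O} (hC : BddAbove C) (h : A ⊆ C) : accP A ⊆ accP C := by
  rintro α ⟨hα, hpos, hsup⟩
  refine ⟨hα.trans_le (ssup_mono hC h), hpos, le_antisymm (sSup_inter_Iio_le C α) ?_⟩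
  calc α = sSup (A ∩ Iio α) := hsup.symm
    _ ≤ sSup (C ∩ Iio α) :=
      csSup_le_csSup' (hC.mono inter_subset_left) (inter_subset_inter_left _ h)

lemma clOf_subset_of_accP_subset {A C : Set O} (hC : BddAbove C) (hAC : A ⊆ C)
    (hclosed : accP C ⊆ C) : clOf A ⊆ C :=
  union_subset hAC ((accP_mono hC hAC).trans hclosed)

lemma nacc_clOf_subset {A : Set O} (hA : BddAbove A) : nacc (clOf A) ⊆ A := by
  rintro c ⟨hc | hc, hnacc⟩
  · exact hc
  · exact absurd ⟨Or.inr hc, accP_mono (bddAbove_clOf hA) subset_union_left hc⟩ hnacc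

lemma exists_mem_nacc_gt {C : Set O} {b : O} (h : ∃ c ∈ C, b < c) :
    ∃ α ∈ nacc C, b < α := by
  set T : Set O := {γ ∈ C | b < γ}
  obtain ⟨hαC, hbα⟩ : sInf T ∈ T := csInf_mem h
  have hbelow : sSup (C ∩ Iio (sInf T)) ≤ b :=
    csSup_le' fun c ⟨hcC, hcα⟩ => not_lt.1 fun hbc =>
      not_le.2 hcα (csInf_le' (show c ∈ T from ⟨hcC, hbc⟩))
  exact ⟨sInf T, ⟨hαC, fun hacc => (hbelow.trans_lt hbα).ne hacc.2.2.2⟩, hbα⟩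

lemma sSup_nacc {C : Set O} (hC : BddAbove C) : sSup (nacc C) = sSup C := by
  refine le_antisymm (csSup_le_csSup' hC sdiff_subset) (le_of_forall_lt fun b hb => ?_)
  obtain ⟨α, hα, hbα⟩ := exists_mem_nacc_gt ((lt_csSup_iff' hC).1 hb)
  exact (lt_csSup_iff' (hC.mono sdiff_subset)).2 ⟨α, hα, hbα⟩

lemma sSup_diff_Iio {x : Set O} (hx : BddAbove x) {s : O} (hs : s < sSup x) :
    sSup (x \ Iio s) = sSup x := by
  refine le_antisymm (csSup_le_csSup' hx sdiff_subset) (le_of_forall_lt fun b hb => ?_)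
  obtain ⟨c, hcx, hc⟩ := (lt_csSup_iff' hx).1 (max_lt hb hs)
  exact (lt_csSup_iff' (hx.mono sdiff_subset)).2
    ⟨c, ⟨hcx, not_lt.2 (le_max_right b s |>.trans hc.le)⟩, (le_max_left b s).trans_lt hc⟩

lemma otp_mono {A C : Set O} (h : A ⊆ C) : otp A ≤ otp C :=
  RelEmbedding.ordinal_type_le (r := Subrel ((· < ·) : O → O → Prop) (· ∈ A))
    (s := Subrel ((· < ·) : O → O → Prop) (· ∈ C))
    ⟨⟨inclusion h, inclusion_injective h⟩, Iff.rfl⟩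

theorem statement1_general (κ : O) (B x : Set O) (hx : x ⊆ Iio κ) :
    sSup (PhiSup B x) = sSup x ∧
    (sSup (x ∩ B) = sSup x →
      nacc (PhiSup B x) ⊆ x ∩ B ∧ sSup (nacc (PhiSup B x)) = sSup x) ∧
    (accP x ⊆ x → PhiSup B x ⊆ x ∧ otp (PhiSup B x) ≤ otp x) := by
  have hxb : BddAbove x := ⟨κ, fun _ ha => (hx ha).le⟩
  have hAb : BddAbove (x ∩ B) := hxb.mono inter_subset_left
  by_cases h : sSup (x ∩ B) = sSup x
  · rw [PhiSup, if_pos h]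
    have hsup : sSup (clOf (x ∩ B)) = sSup x := (sSup_clOf hAb).trans h
    refine ⟨hsup, fun _ => ⟨nacc_clOf_subset hAb, (sSup_nacc (bddAbove_clOf hAb)).trans hsup⟩,
      fun hclosed => ?_⟩
    have hsub := clOf_subset_of_accP_subset (A := x ∩ B) hxb inter_subset_left hclosed
    exact ⟨hsub, otp_mono hsub⟩
  · rw [PhiSup, if_neg h]
    have hlt : sSup (x ∩ B) < sSup x :=
      (csSup_le_csSup' hxb inter_subset_left).lt_of_ne h
    exact ⟨sSup_diff_Iio hxb hlt, fun h' => absurd h' h,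
      fun _ => ⟨sdiff_subset, otp_mono sdiff_subset⟩⟩

/-- basic properties of the operator `Φ^B`. -/
theorem statement1 (κ : O) (B x : Set O) (hB : B ⊆ Iio κ) (hx : x ⊆ Iio κ) :
    sSup (PhiSup B x) = sSup x ∧
    (sSup (x ∩ B) = sSup x →
      nacc (PhiSup B x) ⊆ x ∩ B ∧ sSup (nacc (PhiSup B x)) = sSup x) ∧
    (accP x ⊆ x → PhiSup B x ⊆ x ∧ otp (PhiSup B x) ≤ otp x) :=
  statement1_general κ B x hx
end
end

section
/- Suppose κ is regular uncountable, S, T ⊆ κ stationary, and there is a C-sequence ⟨C_δ : δ ∈ S⟩ with otp(C_δ) < κ for all δ, such that for every club D ⊆ κ there exist δ ∈ S and β < δ with nacc(C_δ) \ β ⊆ D ∩ T (tail club guessing). Then there is a C-sequence ⟨C•_δ : δ ∈ S⟩ such that: (i) otp(C•_δ) = cf(δ) for every δ ∈ S; and (ii) for every club D ⊆ κ, the set {δ ∈ S : nacc(C•_δ) ⊆ D ∩ T} is stationary in κ. -/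
open Set Ordinal

noncomputable section

/-!
If no tail bound worked for all clubs at once, we could pick for each `β` a club `D_β` containing
no `δ ∈ S` with `β < δ` and `nacc C_δ \ (β + 1) ⊆ D_β ∩ T` (intersect a club witnessing the failure
with a club missing the set of such `δ`). Guess the diagonal intersection `Δ` of the `D_β` at `δ`
with bound `β`: as `Δ` is closed and contains the tail of `nacc C_δ`, `δ ∈ Δ`, so `δ ∈ D_β`, and
the tail lies in `D_β ∩ T`, a contradiction. With a uniform bound `β` it remains to thin each `C_δ`
to order type `cf δ` without new non-accumulation points: along a fundamental sequence of `δ`, pick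
points of `nacc C_δ` above `β` at successor steps and take suprema at limit steps.
-/

open Cardinal Order

section Basic

variable {A B F : Set O} {α δ k : O}

lemma UnbIn.mono (h : UnbIn A α) (hAB : A ⊆ B) : UnbIn B α := fun c hc =>
  let ⟨y, hy, hcy, hyα⟩ := h c hc
  ⟨y, hAB hy, hcy, hyα⟩

lemma UnbIn.inter_Ioi (h : UnbIn A δ) {β : O} (hβ : β < δ) : UnbIn (A ∩ Ioi β) δ := by
  intro c hc
  obtain ⟨y, hy, hcy, hyδ⟩ := h (max c β) (max_lt hc hβ)
  exact ⟨y, ⟨hy, (le_max_right c β).trans_lt hcy⟩, (le_max_left c β).trans_lt hcy, hyδ⟩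

lemma UnbIn.isSuccLimit (h : UnbIn A δ) (hδ : δ ≠ 0) : IsSuccLimit δ :=
  Ordinal.isSuccLimit_iff.2 ⟨hδ, isSuccPrelimit_iff_succ_lt.2 fun c hc =>
    let ⟨_, _, hcy, hyδ⟩ := h c hc
    (succ_le_of_lt hcy).trans_lt hyδ⟩

lemma UnbIn.of_sSup_inter_Iio_eq (h : sSup (A ∩ Iio α) = α) : UnbIn A α := by
  intro c hc
  obtain ⟨y, ⟨hyA, hyα⟩, hcy⟩ :=
    (lt_csSup_iff' ⟨α, fun _ hy => hy.2.le⟩).1 (h.symm ▸ hc : c < sSup (A ∩ Iio α))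
  exact ⟨y, hyA, hcy, hyα⟩

lemma IsClubIn.of_unbIn (hsub : F ⊆ Iio k) (hunb : UnbIn F k)
    (hclosed : ∀ α < k, 0 < α → UnbIn F α → α ∈ F) : IsClubIn F k :=
  ⟨hsub, hunb, fun α hα h0 h => hclosed α hα h0 (.of_sSup_inter_Iio_eq h)⟩

lemma IsClubIn.mem_of_unbIn (hF : IsClubIn F k) (hα : α < k) (h0 : 0 < α) (h : UnbIn F α) :
    α ∈ F := by
  refine hF.2.2 α hα h0 (csSup_eq_of_forall_le_of_forall_lt_exists_gt ?_ ?_ ?_)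
  · obtain ⟨y, hy, -, hyα⟩ := h 0 h0
    exact ⟨y, hy, hyα⟩
  · exact fun y hy => hy.2.le
  · intro c hc
    obtain ⟨y, hy, hcy, hyα⟩ := h c hc
    exact ⟨y, ⟨hy, hyα⟩, hcy⟩

lemma IsClubIn.unbIn_nacc (hF : IsClubIn F δ) : UnbIn (nacc F) δ := by
  intro c hc
  obtain ⟨b, hb, hcb, -⟩ := hF.2.1 c hc
  have hy : sInf {x ∈ F | c < x} ∈ {x ∈ F | c < x} := csInf_mem ⟨b, hb, hcb⟩
  refine ⟨_, ⟨hy.1, fun hacc => ?_⟩, hy.2, hF.1 hy.1⟩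
  -- an accumulation point would have a point of `F` between `c` and itself
  obtain ⟨z, hz, hcz, hzy⟩ := UnbIn.of_sSup_inter_Iio_eq hacc.2.2.2 c hy.2
  exact (csInf_le' (show z ∈ {x ∈ F | c < x} from ⟨hz, hcz⟩)).not_gt hzy

lemma IsStatIn.mono (h : IsStatIn A k) (hAB : A ⊆ B) (hB : B ⊆ Iio k) : IsStatIn B k :=
  ⟨hB, fun D hD => (h.2 D hD).mono (inter_subset_inter_left D hAB)⟩

lemma lt_ssup (hA : A ⊆ Iio δ) {a : O} (ha : a ∈ A) : a < ssup A :=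
  (lt_add_one a).trans_le <| le_csSup (bddAbove_def.2 ⟨δ, by
    rintro _ ⟨b, hb, rfl⟩
    exact add_one_le_of_lt (hA hb)⟩) (mem_image_of_mem _ ha)

lemma iSup_Iio_lt_of_lt_cof {ξ : O} (hξ : ξ.card < k.cof) {f : O → O} (hf : ∀ i < ξ, f i < k) :
    ⨆ i : Iio ξ, f i < k :=
  Ordinal.lift_iSup_lt_of_lt_cof (by
    rwa [Cardinal.mk_Iio_ordinal, Cardinal.lift_lift, ← Ordinal.lift_cof, Cardinal.lift_lt])
    fun i => hf i i.2

end Basic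

section Clubs

variable {k : O}

lemma exists_closure_point (hk : ℵ₀ < k.cof) (h : O → O) (hh : ∀ ξ < k, h ξ < k) {α : O}
    (hα : α < k) : ∃ σ, α < σ ∧ σ < k ∧ ∀ ξ < σ, ∃ η, ξ < η ∧ η < σ ∧ h η < σ := by
  have hlim : IsSuccLimit k := Ordinal.one_lt_cof_iff.1 (one_lt_aleph0.trans hk)
  set f : O → O := fun ξ => max (succ ξ) (h ξ)
  have hiter : ∀ n, f^[n] α < k := by
    intro n
    induction n with
    | zero => exact hα
    | succ n ih =>
      rw [Function.iterate_succ_apply']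
      exact max_lt (hlim.succ_lt ih) (hh _ ih)
  have hstep : ∀ n, f^[n] α < f^[n + 1] α := fun n => by
    rw [Function.iterate_succ_apply']
    exact (lt_succ _).trans_le (le_max_left _ _)
  refine ⟨Ordinal.nfp f α, (hstep 0).trans_le (Ordinal.iterate_le_nfp f α 1), ?_, fun ξ hξ => ?_⟩
  · rw [← Ordinal.iSup_iterate_eq_nfp]
    exact Ordinal.iSup_lt_of_lt_cof (by rwa [Cardinal.mk_nat]) hiter
  · obtain ⟨n, hn⟩ := Ordinal.lt_nfp_iff.1 hξ
    refine ⟨f^[n] α, hn, (hstep n).trans_le (Ordinal.iterate_le_nfp f α _), ?_⟩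
    calc h (f^[n] α) ≤ f^[n + 1] α := by
          rw [Function.iterate_succ_apply']
          exact le_max_right _ _
      _ < f^[n + 2] α := hstep _
      _ ≤ Ordinal.nfp f α := Ordinal.iterate_le_nfp f α _

lemma IsClubIn.inter (hk : ℵ₀ < k.cof) {D E : Set O} (hD : IsClubIn D k) (hE : IsClubIn E k) :
    IsClubIn (D ∩ E) k := by
  choose! d hdD hd using hD.2.1
  choose! e heE he using hE.2.1
  refine .of_unbIn (fun _ hx => hD.1 hx.1) (fun α hα => ?_) fun α hα h0 hunb =>
    ⟨hD.mem_of_unbIn hα h0 (hunb.mono inter_subset_left),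
      hE.mem_of_unbIn hα h0 (hunb.mono inter_subset_right)⟩
  have hed : ∀ ξ < k, ξ < d ξ ∧ d ξ < e (d ξ) ∧ e (d ξ) < k := fun ξ hξ =>
    ⟨(hd ξ hξ).1, he _ (hd ξ hξ).2⟩
  obtain ⟨σ, hασ, hσk, hσ⟩ :=
    exists_closure_point hk (fun ξ => e (d ξ)) (fun ξ hξ => (hed ξ hξ).2.2) hα
  have hσ0 : 0 < σ := zero_le.trans_lt hασ
  refine ⟨σ, ⟨hD.mem_of_unbIn hσk hσ0 fun c hc => ?_, hE.mem_of_unbIn hσk hσ0 fun c hc => ?_⟩,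
    hασ, hσk⟩
  all_goals
    obtain ⟨η, hcη, hησ, hη⟩ := hσ c hc
    obtain ⟨h1, h2, -⟩ := hed η (hησ.trans hσk)
  · exact ⟨d η, hdD η (hησ.trans hσk), hcη.trans h1, h2.trans hη⟩
  · exact ⟨e (d η), heE _ (hd η (hησ.trans hσk)).2, hcη.trans (h1.trans h2), hη⟩

def diagInter (F : O → Set O) (k : O) : Set O := {α | α < k ∧ ∀ b < α, α ∈ F b}

lemma isClubIn_diagInter {κ : Cardinal.{0}} (hκ : κ.IsRegular) (hκ1 : ℵ₀ < κ) {F : O → Set O}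
    (hF : ∀ b < κ.ord, IsClubIn (F b) κ.ord) : IsClubIn (diagInter F κ.ord) κ.ord := by
  choose! next hnextF hnext using fun b hb => (hF b hb).2.1
  have hcof : ∀ ξ < κ.ord, ξ.card < κ.ord.cof := fun ξ hξ => by
    rw [hκ.cof_ord]
    exact lt_ord.1 hξ
  refine .of_unbIn (fun _ hα => hα.1) (fun α hα => ?_) fun α hα h0 hunb =>
    ⟨hα, fun b hb => (hF b (hb.trans hα)).mem_of_unbIn hα h0 fun c hc => ?_⟩
  · obtain ⟨σ, hασ, hσk, hσ⟩ := exists_closure_point (by rwa [hκ.cof_ord])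
      (fun ξ => ⨆ b : Iio ξ, next b ξ)
      (fun ξ hξ => iSup_Iio_lt_of_lt_cof (hcof ξ hξ) fun b hb => (hnext b (hb.trans hξ) ξ hξ).2) hα
    refine ⟨σ, ⟨hσk, fun b hb => (hF b (hb.trans hσk)).mem_of_unbIn hσk
      (zero_le.trans_lt hασ) fun c hc => ?_⟩, hασ, hσk⟩
    obtain ⟨η, hη, hησ, hnextη⟩ := hσ (max b c) (max_lt hb hc)
    have hbη : b < η := (le_max_left b c).trans_lt hη
    refine ⟨next b η, hnextF b (hb.trans hσk) η (hησ.trans hσk),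
      (le_max_right b c).trans_lt (hη.trans (hnext b (hb.trans hσk) η (hησ.trans hσk)).1), ?_⟩
    exact (Ordinal.le_iSup (fun b : Iio η => next b η) ⟨b, hbη⟩).trans_lt hnextη
  · obtain ⟨y, hy, hcy, hyα⟩ := hunb (max b c) (max_lt hb hc)
    exact ⟨y, hy.2 b ((le_max_left b c).trans_lt hcy), (le_max_right b c).trans_lt hcy, hyα⟩

end Clubs

section ThinClub

variable {x : O → O} {L δ : O}

lemma otp_image_Iio (hx : StrictMonoOn x (Iio L)) : otp (x '' Iio L) = olift L := by
  rw [otp, olift, ← Ordinal.type_lt_Iio]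
  exact Ordinal.type_eq.2 ⟨(hx.orderIso x (Iio L)).symm.toRelIsoLT⟩

lemma image_Iio_inter_Iio (hx : StrictMonoOn x (Iio L)) {i : O} (hi : i < L) :
    x '' Iio L ∩ Iio (x i) = x '' Iio i := by
  ext y
  constructor
  · rintro ⟨⟨j, hj, rfl⟩, hji⟩
    exact ⟨j, hx.lt_iff_lt hj hi |>.1 hji, rfl⟩
  · rintro ⟨j, hj, rfl⟩
    exact ⟨mem_image_of_mem x (hj.trans hi), hx (hj.trans hi) hi hj⟩

lemma nacc_image_Iio_subset (hx : StrictMonoOn x (Iio L))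
    (hcont : ∀ i < L, IsSuccLimit i → x i = ⨆ j : Iio i, x j) (hxδ : ∀ i < L, x i < δ) :
    nacc (x '' Iio L) ⊆ x '' {i | i < L ∧ ¬IsSuccLimit i} := by
  rintro _ ⟨⟨i, hi, rfl⟩, hnacc⟩
  refine ⟨i, ⟨hi, fun hlim => hnacc ⟨mem_image_of_mem x hi, ?_, ?_, ?_⟩⟩, rfl⟩
  · exact lt_ssup (by rintro _ ⟨j, hj, rfl⟩; exact hxδ j hj) (mem_image_of_mem x hi)
  · exact zero_le.trans_lt (hx (hlim.pos.trans hi) hi hlim.pos)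
  · rw [image_Iio_inter_Iio hx hi, sSup_image', hcont i hi hlim]

lemma isClubIn_image_Iio (hx : StrictMonoOn x (Iio L))
    (hcont : ∀ i < L, IsSuccLimit i → x i = ⨆ j : Iio i, x j) (hxδ : ∀ i < L, x i < δ)
    (hunb : UnbIn (x '' Iio L) δ) : IsClubIn (x '' Iio L) δ := by
  refine .of_unbIn (by rintro _ ⟨i, hi, rfl⟩; exact hxδ i hi) hunb fun α hα h0 hα' => ?_
  obtain ⟨_, ⟨i, hi, rfl⟩, hαi, -⟩ := hunb α hα
  have hI : {i | i < L ∧ α ≤ x i}.Nonempty := ⟨i, hi, hαi.le⟩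
  set i₀ := sInf {i | i < L ∧ α ≤ x i}
  obtain ⟨hi₀, hαi₀⟩ : i₀ < L ∧ α ≤ x i₀ := csInf_mem hI
  have hbelow : ∀ j < L, x j < α ↔ j < i₀ := fun j hj =>
    ⟨fun h => lt_of_not_ge fun hij => h.not_ge (hαi₀.trans (hx.monotoneOn hi₀ hj hij)),
      fun h => lt_of_not_ge fun hαj => (csInf_le' ⟨hj, hαj⟩ : i₀ ≤ j).not_gt h⟩
  by_cases hlim : IsSuccLimit i₀
  · refine ⟨i₀, hi₀, le_antisymm ?_ hαi₀⟩
    rw [hcont i₀ hi₀ hlim]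
    exact Ordinal.iSup_le fun j => ((hbelow j (j.2.trans hi₀)).2 j.2).le
  -- otherwise the points of `x` below `α` are bounded below `α`
  obtain ⟨c, hcα, hc⟩ : ∃ c < α, ∀ j < i₀, x j ≤ c := by
    rcases Ordinal.zero_or_succ_or_isSuccLimit i₀ with h | ⟨j, hj⟩ | h
    · exact ⟨0, h0, fun j hj => absurd (h ▸ hj) (not_lt_of_ge zero_le)⟩
    · have hjL : j < L := (hj ▸ lt_succ j).trans hi₀
      refine ⟨x j, (hbelow j hjL).2 (hj ▸ lt_succ j), fun j' hj' => ?_⟩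
      exact hx.monotoneOn (hj'.trans hi₀) hjL (le_of_lt_succ (hj ▸ hj'))
    · exact absurd h hlim
  obtain ⟨_, ⟨j, hj, rfl⟩, hcj, hjα⟩ := hα' c hcα
  exact ((hc j ((hbelow j hj).1 hjα)).not_gt hcj).elim

end ThinClub

open Classical in
def thinSeq (A : Set O) (g : O → O) : O → O :=
  WellFoundedLT.fix fun i x =>
    if IsSuccLimit i then ⨆ j : Iio i, x j j.2
    else sInf {a ∈ A | g i < a ∧ ∀ j (hj : j < i), x j hj < a}

section ThinSeq

variable {A : Set O} {g : O → O} {δ : O}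

lemma thinSeq_of_isSuccLimit {i : O} (hi : IsSuccLimit i) :
    thinSeq A g i = ⨆ j : Iio i, thinSeq A g j := by
  rw [thinSeq, WellFoundedLT.fix_eq, if_pos hi]

lemma thinSeq_of_not_isSuccLimit {i : O} (hi : ¬IsSuccLimit i) :
    thinSeq A g i = sInf {a ∈ A | g i < a ∧ ∀ j < i, thinSeq A g j < a} := by
  rw [thinSeq, WellFoundedLT.fix_eq, if_neg hi]

lemma thinSeq_spec (hA : A ⊆ Iio δ) (hAunb : UnbIn A δ) (hg : ∀ i < δ.cof.ord, g i < δ) :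
    ∀ i < δ.cof.ord, thinSeq A g i < δ ∧ (∀ j < i, thinSeq A g j < thinSeq A g i) ∧
      (¬IsSuccLimit i → thinSeq A g i ∈ A ∧ g i < thinSeq A g i) := by
  intro i
  induction i using WellFoundedLT.induction with
  | _ i IH =>
  intro hi
  have hsup : ⨆ j : Iio i, thinSeq A g j < δ :=
    iSup_Iio_lt_of_lt_cof (lt_ord.1 hi) fun j hj => (IH j hj (hj.trans hi)).1
  by_cases hlim : IsSuccLimit i
  · refine ⟨thinSeq_of_isSuccLimit hlim ▸ hsup, fun j hj => ?_, fun h => absurd hlim h⟩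
    have hsj : succ j < i := hlim.succ_lt hj
    calc thinSeq A g j < thinSeq A g (succ j) := (IH _ hsj (hsj.trans hi)).2.1 j (lt_succ j)
      _ ≤ thinSeq A g i := by
        rw [thinSeq_of_isSuccLimit hlim]
        exact Ordinal.le_iSup (fun j : Iio i => thinSeq A g j) ⟨succ j, hsj⟩
  · obtain ⟨a, ha, hba, -⟩ := hAunb _ (max_lt (hg i hi) hsup)
    have hmem : thinSeq A g i ∈ {a ∈ A | g i < a ∧ ∀ j < i, thinSeq A g j < a} := by
      rw [thinSeq_of_not_isSuccLimit hlim]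
      refine csInf_mem ⟨a, ha, (le_max_left _ _).trans_lt hba, fun j hj => ?_⟩
      exact ((Ordinal.le_iSup (fun j : Iio i => thinSeq A g j) ⟨j, hj⟩).trans
        (le_max_right _ _)).trans_lt hba
    exact ⟨hA hmem.1, hmem.2.2, fun _ => ⟨hmem.1, hmem.2.1⟩⟩

end ThinSeq

theorem exists_isClubIn_otp_eq_nacc_subset {δ : O} {A : Set O} (hA : A ⊆ Iio δ)
    (hAunb : UnbIn A δ) :
    ∃ X, IsClubIn X δ ∧ otp X = olift δ.cof.ord ∧ nacc X ⊆ A := by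
  set L := δ.cof.ord with hL
  obtain ⟨f, hf⟩ := Ordinal.exists_isFundamentalSeq hL.symm
  let g : O → O := fun i => if h : i < L then f ⟨i, h⟩ else 0
  have hgf : ∀ i (hi : i < L), g i = f ⟨i, hi⟩ := fun i hi => dif_pos hi
  have hg : ∀ i < L, g i < δ := fun i hi => hgf i hi ▸ (f _).2
  have hgmono : MonotoneOn g (Iio L) := fun i hi j hj hij => by
    rw [hgf i hi, hgf j hj]
    exact hf.strictMono.monotone (show (⟨i, hi⟩ : Iio L) ≤ ⟨j, hj⟩ from hij)
  have hx := thinSeq_spec hA hAunb hg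
  have hmono : StrictMonoOn (thinSeq A g) (Iio L) := fun i _ j hj hij => (hx j hj).2.1 i hij
  have hunb : UnbIn (thinSeq A g '' Iio L) δ := by
    intro α hα
    have hL : IsSuccLimit L := isSuccLimit_ord <| aleph0_le_cof_iff.2 <| Ordinal.one_lt_cof_iff.2 <|
      hAunb.isSuccLimit (zero_le.trans_lt hα).ne'
    obtain ⟨_, ⟨i, rfl⟩, hαi⟩ := hf.isCofinal_range ⟨α, hα⟩
    have hsi : succ i.1 < L := hL.succ_lt i.2
    obtain ⟨hxδ, -, hxA⟩ := hx _ hsi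
    refine ⟨_, mem_image_of_mem _ hsi, ?_, hxδ⟩
    calc α ≤ g i := hgf i i.2 ▸ hαi
      _ ≤ g (succ i) := hgmono i.2 hsi (le_succ _)
      _ < thinSeq A g (succ i) := (hxA (not_isSuccLimit_succ _)).2
  refine ⟨_, isClubIn_image_Iio hmono (fun i _ => thinSeq_of_isSuccLimit)
    (fun i hi => (hx i hi).1) hunb, otp_image_Iio hmono, ?_⟩
  rintro _ hy
  obtain ⟨i, ⟨hi, hlim⟩, rfl⟩ := nacc_image_Iio_subset hmono (fun i _ => thinSeq_of_isSuccLimit)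
    (fun i hi => (hx i hi).1) hy
  exact ((hx i hi).2.2 hlim).1

theorem exists_tail_bound_isStatIn {κ : Cardinal.{0}} (hκ : κ.IsRegular) (hκ1 : ℵ₀ < κ)
    {S T : Set O} (hS : S ⊆ Iio κ.ord) {C : O → Set O} (hC : ∀ δ ∈ S, IsClubIn (C δ) δ)
    (hguess : ∀ D, IsClubIn D κ.ord → ∃ δ ∈ S, ∃ β < δ, nacc (C δ) \ Iio β ⊆ D ∩ T) :
    ∃ β, ∀ D, IsClubIn D κ.ord →
      IsStatIn {δ ∈ S | β < δ ∧ nacc (C δ) ∩ Ioi β ⊆ D ∩ T} κ.ord := by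
  by_contra! hcon
  have hbad : ∀ β, ∃ D, IsClubIn D κ.ord ∧
      ∀ δ ∈ S, β < δ → nacc (C δ) ∩ Ioi β ⊆ D ∩ T → δ ∉ D := by
    intro β
    obtain ⟨D, hD, hns⟩ := hcon β
    simp only [IsStatIn, not_and, not_forall, not_nonempty_iff_eq_empty] at hns
    obtain ⟨E, hE, hDE⟩ := hns fun δ hδ => hS hδ.1
    refine ⟨D ∩ E, hD.inter (by rwa [hκ.cof_ord]) hE, fun δ hδS hβδ hsub hδ => ?_⟩
    exact hDE.subset ⟨⟨hδS, hβδ, hsub.trans (inter_subset_inter_left T inter_subset_left)⟩, hδ.2⟩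
  choose D hD hDbad using hbad
  have hΔ := isClubIn_diagInter hκ hκ1 fun β _ => hD β
  obtain ⟨δ, hδS, β, hβδ, hguessδ⟩ := hguess _ hΔ
  have htail : nacc (C δ) ∩ Ioi β ⊆ diagInter D κ.ord ∩ T := fun y hy =>
    hguessδ ⟨hy.1, fun h => lt_asymm (mem_Iio.1 h) hy.2⟩
  have hδΔ : δ ∈ diagInter D κ.ord := hΔ.mem_of_unbIn (hS hδS) (zero_le.trans_lt hβδ)
    ((((hC δ hδS).unbIn_nacc).inter_Ioi hβδ).mono fun y hy => (htail hy).1)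
  exact hDbad β δ hδS hβδ (fun y hy => ⟨(htail hy).1.2 β hy.2, (htail hy).2⟩) (hδΔ.2 β hβδ)

theorem statement4_general (κ : Cardinal.{0}) (hκ : κ.IsRegular) (hκ1 : Cardinal.aleph0 < κ)
    (S T : Set O) (hS : IsStatIn S κ.ord)
    (C : O → Set O)
    (hC : ∀ δ ∈ S, IsClubIn (C δ) δ ∧ otp (C δ) < olift κ.ord)
    (hguess : ∀ D, IsClubIn D κ.ord → ∃ δ ∈ S, ∃ β < δ, nacc (C δ) \ Iio β ⊆ D ∩ T) :
    ∃ C' : O → Set O,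
      (∀ δ ∈ S, IsClubIn (C' δ) δ ∧ otp (C' δ) = olift (Ordinal.cof δ).ord) ∧
      ∀ D, IsClubIn D κ.ord → IsStatIn {δ ∈ S | nacc (C' δ) ⊆ D ∩ T} κ.ord := by
  have hCclub : ∀ δ ∈ S, IsClubIn (C δ) δ := fun δ hδ => (hC δ hδ).1
  obtain ⟨β, hβ⟩ := exists_tail_bound_isStatIn hκ hκ1 hS.1 hCclub hguess
  have hthin : ∀ δ ∈ S, ∃ X, IsClubIn X δ ∧ otp X = olift δ.cof.ord ∧
      (β < δ → nacc X ⊆ nacc (C δ) ∩ Ioi β) := by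
    intro δ hδ
    by_cases hβδ : β < δ
    · obtain ⟨X, hX, hotp, hnacc⟩ := exists_isClubIn_otp_eq_nacc_subset
        (fun y hy => (hCclub δ hδ).1 hy.1.1) (((hCclub δ hδ).unbIn_nacc).inter_Ioi hβδ)
      exact ⟨X, hX, hotp, fun _ => hnacc⟩
    · obtain ⟨X, hX, hotp, -⟩ :=
        exists_isClubIn_otp_eq_nacc_subset (hCclub δ hδ).1 (hCclub δ hδ).2.1
      exact ⟨X, hX, hotp, fun h => absurd h hβδ⟩
  choose! C' hC'club hC'otp hC'nacc using hthin
  refine ⟨C', fun δ hδ => ⟨hC'club δ hδ, hC'otp δ hδ⟩, fun D hD => ?_⟩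
  exact (hβ D hD).mono (fun δ ⟨hδS, hβδ, hsub⟩ => ⟨hδS, (hC'nacc δ hδS hβδ).trans hsub⟩)
    fun δ hδ => hS.1 hδ.1

/-- tail club-guessing yields guessing with minimal ordertypes and
stationarily many guesses. -/
theorem statement4 (κ : Cardinal.{0}) (hκ : κ.IsRegular) (hκ1 : Cardinal.aleph0 < κ)
    (S T : Set O) (hS : IsStatIn S κ.ord) (hT : IsStatIn T κ.ord)
    (C : O → Set O)
    (hC : ∀ δ ∈ S, IsClubIn (C δ) δ ∧ otp (C δ) < olift κ.ord)
    (hguess : ∀ D, IsClubIn D κ.ord → ∃ δ ∈ S, ∃ β < δ, nacc (C δ) \ Iio β ⊆ D ∩ T) :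
    ∃ C' : O → Set O,
      (∀ δ ∈ S, IsClubIn (C' δ) δ ∧ otp (C' δ) = olift (Ordinal.cof δ).ord) ∧
      ∀ D, IsClubIn D κ.ord → IsStatIn {δ ∈ S | nacc (C' δ) ⊆ D ∩ T} κ.ord :=
  statement4_general κ hκ hκ1 S T hS C hC hguess
end
end
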